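/- arXiv:1706.08134 — 6 statements merged into one kernel-verified Lean document; each statement's English description precedes it below -/
import Mathlib

section
/- Let F be a simple graph on 7 vertices whose complement contains a cycle C_4 as a subgraph. Then F does not arrow (P_3, C_7); that is, there exists a 2-coloring of the edges of F with no red copy of P_3 and no blue copy of C_7. -/
open SimpleGraph

/-- `F` contains a copy of `G` (an injective graph homomorphism from `G` to `F`). -/
def Contains {α β : Type*} (F : SimpleGraph α) (G : SimpleGraph β) : Prop :=
  ∃ f : G →g F, Function.Injective f

/-- `F → (G, H)`: for every red/blue coloring of the edges of `F` (given by the spanning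
subgraph `R ≤ F` of red edges, the other edges of `F` being blue), there is a red copy of `G`
or a blue copy of `H`. -/
def Arrows {α β γ : Type*} (F : SimpleGraph α) (G : SimpleGraph β) (H : SimpleGraph γ) : Prop :=
  ∀ R : SimpleGraph α, R ≤ F → Contains R G ∨ Contains (F \ R) H

lemma cycle7_no_indep4 : ∀ i j k l : Fin 7, i ≠ j → i ≠ k → i ≠ l → j ≠ k → j ≠ l → k ≠ l →
    (cycleGraph 7).Adj i j ∨ (cycleGraph 7).Adj i k ∨ (cycleGraph 7).Adj i l ∨
    (cycleGraph 7).Adj j k ∨ (cycleGraph 7).Adj j l ∨ (cycleGraph 7).Adj k l := by decide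

theorem stmt_0 (V : Type*) [Fintype V] (F : SimpleGraph V)
    (hV : Fintype.card V = 7)
    (hC4 : Contains Fᶜ (cycleGraph 4)) :
    ¬ Arrows F (pathGraph 3) (cycleGraph 7) := by
  obtain ⟨f, hf⟩ := hC4
  set a := f 0 with ha
  set b := f 1 with hb
  set c := f 2 with hc
  set d := f 3 with hd
  have hab : a ≠ b := fun h => by simpa using hf h
  have hac : a ≠ c := fun h => by simpa using hf h
  have had : a ≠ d := fun h => by simpa using hf h
  have hbc : b ≠ c := fun h => by simpa using hf h
  have hbd : b ≠ d := fun h => by simpa using hf h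
  have hcd : c ≠ d := fun h => by simpa using hf h
  have nab : ¬ F.Adj a b := ((compl_adj F a b).mp (f.map_adj (by decide))).2
  have nbc : ¬ F.Adj b c := ((compl_adj F b c).mp (f.map_adj (by decide))).2
  have ncd : ¬ F.Adj c d := ((compl_adj F c d).mp (f.map_adj (by decide))).2
  have nda : ¬ F.Adj d a := ((compl_adj F d a).mp (f.map_adj (by decide))).2
  set R : SimpleGraph V := SimpleGraph.fromEdgeSet {s(a,c), s(b,d)} ⊓ F with hR
  intro hArr
  rcases hArr R inf_le_right with ⟨g, hg⟩ | ⟨g, hg⟩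
  · -- red P3
    have h01 : R.Adj (g 0) (g 1) := g.map_adj (by simp [pathGraph_adj])
    have h12 : R.Adj (g 1) (g 2) := g.map_adj (by simp [pathGraph_adj])
    have hxz : g 0 ≠ g 2 := fun h => by simpa using hg h
    have m1 : s(g 0, g 1) = s(a,c) ∨ s(g 0, g 1) = s(b,d) := by
      have := h01.1
      rw [fromEdgeSet_adj] at this
      simpa using this.1
    have m2 : s(g 1, g 2) = s(a,c) ∨ s(g 1, g 2) = s(b,d) := by
      have := h12.1
      rw [fromEdgeSet_adj] at this
      simpa using this.1
    simp only [Sym2.eq_iff] at m1 m2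
    rcases m1 with (⟨e1,e2⟩|⟨e1,e2⟩)|(⟨e1,e2⟩|⟨e1,e2⟩) <;>
      rcases m2 with (⟨e3,e4⟩|⟨e3,e4⟩)|(⟨e3,e4⟩|⟨e3,e4⟩) <;> simp_all
  · -- blue C7
    have indep : ∀ u v : V, u ∈ ({a,b,c,d} : Set V) → v ∈ ({a,b,c,d} : Set V) → u ≠ v →
        ¬ (F \ R).Adj u v := by
      intro u v hu hv huv hadj
      have hF : F.Adj u v := hadj.1
      have hnR : ¬ R.Adj u v := hadj.2
      apply hnR
      constructor
      · rw [fromEdgeSet_adj]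
        refine ⟨?_, huv⟩
        simp only [Set.mem_insert_iff, Set.mem_singleton_iff] at hu hv ⊢
        rcases hu with rfl|rfl|rfl|rfl <;> rcases hv with rfl|rfl|rfl|rfl <;>
          first
          | exact absurd rfl huv
          | exact absurd hF nab
          | exact absurd hF.symm nab
          | exact absurd hF nbc
          | exact absurd hF.symm nbc
          | exact absurd hF ncd
          | exact absurd hF.symm ncd
          | exact absurd hF nda
          | exact absurd hF.symm nda
          | simp [Sym2.eq_swap]
      · exact hF
    have hsurj : Function.Surjective g := by
      have hcard : Fintype.card (Fin 7) = Fintype.card V := by simp [hV]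
      exact ((Fintype.bijective_iff_injective_and_card g).mpr ⟨hg, hcard⟩).2
    obtain ⟨i, hi⟩ := hsurj a
    obtain ⟨j, hj⟩ := hsurj b
    obtain ⟨k, hk⟩ := hsurj c
    obtain ⟨l, hl⟩ := hsurj d
    have hij : i ≠ j := fun h => hab (hi ▸ hj ▸ congrArg g h)
    have hik : i ≠ k := fun h => hac (hi ▸ hk ▸ congrArg g h)
    have hil : i ≠ l := fun h => had (hi ▸ hl ▸ congrArg g h)
    have hjk : j ≠ k := fun h => hbc (hj ▸ hk ▸ congrArg g h)
    have hjl : j ≠ l := fun h => hbd (hj ▸ hl ▸ congrArg g h)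
    have hkl : k ≠ l := fun h => hcd (hk ▸ hl ▸ congrArg g h)
    have hmem : ∀ x ∈ ({a,b,c,d} : Set V), True := fun _ _ => trivial
    rcases cycle7_no_indep4 i j k l hij hik hil hjk hjl hkl with h|h|h|h|h|h
    · exact indep a b (by simp) (by simp) hab (hi ▸ hj ▸ g.map_adj h)
    · exact indep a c (by simp) (by simp) hac (hi ▸ hk ▸ g.map_adj h)
    · exact indep a d (by simp) (by simp) had (hi ▸ hl ▸ g.map_adj h)
    · exact indep b c (by simp) (by simp) hbc (hj ▸ hk ▸ g.map_adj h)
    · exact indep b d (by simp) (by simp) hbd (hj ▸ hl ▸ g.map_adj h)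
    · exact indep c d (by simp) (by simp) hcd (hk ▸ hl ▸ g.map_adj h)
end

section
/- Let F_7 be the simple graph on vertex set {v_1, ..., v_7} that is the complement of the graph with edge set {v_1v_2, v_1v_3, v_2v_3, v_2v_4, v_4v_5, v_5v_6, v_5v_7, v_6v_7}. Then F_7 has 13 edges and F_7 → (P_3, C_7). -/
open SimpleGraph

/-- The graph `F₇`: the complement of the graph on 7 vertices with the listed 8 edges
(vertex `vᵢ` of the paper is `i - 1 : Fin 7`). -/
def F7 : SimpleGraph (Fin 7) :=
  (fromEdgeSet {s(0,1), s(0,2), s(1,2), s(1,3), s(3,4), s(4,5), s(4,6), s(5,6)})ᶜ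

/-!
If the red graph contains no `P₃`, every vertex has at most one red neighbour, so the red edges
form a matching of `F₇`, encoded by the involution sending each vertex to its red partner. Since
`{v₅, v₆, v₇}` is independent in `F₇`, such a matching is determined by the partners of
`v₁, …, v₄`, and a finite check shows that one of nine Hamiltonian cycles of `F₇` avoids it.
-/

open Function

section Matching

variable {α : Type*} {R : SimpleGraph α}

theorem contains_pathGraph_three {v x y : α} (hx : R.Adj v x) (hy : R.Adj v y) (hxy : x ≠ y) :
    Contains R (pathGraph 3) := by
  refine ⟨⟨![x, v, y], fun {a b} hab => ?_⟩, fun a b hab => ?_⟩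
  · rw [pathGraph_adj] at hab
    fin_cases a <;> fin_cases b <;> simp_all [R.adj_comm]
  · have := hx.ne
    have := hy.ne
    fin_cases a <;> fin_cases b <;> simp_all [eq_comm]

theorem exists_involutive_of_subsingleton_neighborSet (hR : ∀ v, (R.neighborSet v).Subsingleton) :
    ∃ p : α → α, Involutive p ∧ (∀ v, p v = v ∨ R.Adj v (p v)) ∧ ∀ x y, R.Adj x y → p x = y := by
  classical
  let p v := if h : ∃ w, R.Adj v w then h.choose else v
  have hpartner : ∀ x y, R.Adj x y → p x = y := fun x y h => by
    have hx : ∃ w, R.Adj x w := ⟨y, h⟩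
    simp only [p, dif_pos hx]
    exact hR x hx.choose_spec h
  have hself : ∀ v, p v = v ∨ R.Adj v (p v) := fun v => by
    by_cases h : ∃ w, R.Adj v w
    · exact .inr (by simp only [p, dif_pos h]; exact h.choose_spec)
    · exact .inl (dif_neg h)
  refine ⟨p, fun v => ?_, hself, hpartner⟩
  rcases hself v with h | h
  · rw [h, h]
  · exact hpartner _ _ h.symm

end Matching

instance : DecidableRel F7.Adj := fun _ _ => by
  unfold F7
  infer_instance

theorem F7_edgeSet_ncard : F7.edgeSet.ncard = 13 := by
  rw [Set.ncard_eq_toFinset_card']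
  decide

theorem F7_adj_lt_four : ∀ u v, F7.Adj u v → u < 4 ∨ v < 4 := by
  decide

-- Found by computer search: every matching of `F₇` is disjoint from one of these cycles.
def hamCycle : Fin 9 → Fin 7 → Fin 7 := ![
  ![0, 3, 5, 1, 4, 2, 6], ![0, 3, 5, 1, 6, 2, 4], ![0, 3, 5, 2, 4, 1, 6],
  ![0, 3, 5, 2, 6, 1, 4], ![0, 3, 6, 1, 5, 2, 4], ![0, 4, 1, 5, 2, 3, 6],
  ![0, 4, 1, 6, 3, 2, 5], ![0, 4, 2, 3, 5, 1, 6], ![0, 5, 1, 4, 2, 3, 6]]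

theorem hamCycle_injective : ∀ k, Injective (hamCycle k) := by
  decide

theorem F7_adj_hamCycle :
    ∀ k i j, (cycleGraph 7).Adj i j → F7.Adj (hamCycle k i) (hamCycle k j) := by
  decide

/- `a, b, c, d` are the partners of `v₁, …, v₄` in a matching (a vertex being its own partner when
unmatched), subject to the constraints this imposes. Since every edge of `F₇` meets `{v₁, …, v₄}`,
an edge is in the matching iff the map `![a, b, c, d, 4, 5, 6]` sends one endpoint to the other. -/
set_option synthInstance.maxSize 1024 in
theorem exists_hamCycle_avoiding_cover_partners :
    ∀ a : Fin 7, a = 0 ∨ F7.Adj 0 a → ∀ b : Fin 7, b = 1 ∨ F7.Adj 1 b →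
    ∀ c : Fin 7, c = 2 ∨ F7.Adj 2 c → ∀ d : Fin 7, d = 3 ∨ F7.Adj 3 d →
    [a, b, c, d].Nodup → (a = 3 ↔ d = 0) → (c = 3 ↔ d = 2) →
    ∃ k, ∀ i j, (cycleGraph 7).Adj i j → ![a, b, c, d, 4, 5, 6] (hamCycle k i) ≠ hamCycle k j := by
  decide

theorem exists_hamCycle_avoiding_of_involutive {p : Fin 7 → Fin 7} (hp : Involutive p)
    (hpF : ∀ v, p v = v ∨ F7.Adj v (p v)) :
    ∃ k, ∀ i j, (cycleGraph 7).Adj i j → p (hamCycle k i) ≠ hamCycle k j := by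
  have hnodup : [p 0, p 1, p 2, p 3].Nodup := by simp [hp.injective.eq_iff]
  obtain ⟨k, hk⟩ := exists_hamCycle_avoiding_cover_partners _ (hpF 0) _ (hpF 1) _ (hpF 2) _ (hpF 3)
    hnodup (hp.eq_iff.trans eq_comm) (hp.eq_iff.trans eq_comm)
  have hcover : ∀ v : Fin 7, v < 4 → ![p 0, p 1, p 2, p 3, 4, 5, 6] v = p v := by
    intro v hv
    fin_cases v <;> first | rfl | simp at hv
  refine ⟨k, fun i j hij hred => ?_⟩
  rcases F7_adj_lt_four _ _ (F7_adj_hamCycle k i j hij) with hi | hj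
  · exact hk i j hij (by rw [hcover _ hi, hred])
  · exact hk j i hij.symm (by rw [hcover _ hj, ← hred, hp])

theorem F7_sdiff_contains_cycleGraph {R : SimpleGraph (Fin 7)} (hR : R ≤ F7)
    (hmatch : ∀ v, (R.neighborSet v).Subsingleton) : Contains (F7 \ R) (cycleGraph 7) := by
  obtain ⟨p, hp, hpR, hpartner⟩ := exists_involutive_of_subsingleton_neighborSet hmatch
  obtain ⟨k, hk⟩ := exists_hamCycle_avoiding_of_involutive hp fun v => (hpR v).imp_right (hR ·)
  exact ⟨⟨hamCycle k, fun {i j} hij =>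
    ⟨F7_adj_hamCycle k i j hij, fun hred => hk i j hij (hpartner _ _ hred)⟩⟩, hamCycle_injective k⟩

theorem stmt_2 : F7.edgeSet.ncard = 13 ∧ Arrows F7 (pathGraph 3) (cycleGraph 7) := by
  refine ⟨F7_edgeSet_ncard, fun R hR => ?_⟩
  by_cases hmatch : ∀ v, (R.neighborSet v).Subsingleton
  · exact .inr (F7_sdiff_contains_cycleGraph hR hmatch)
  · simp only [Set.Subsingleton, not_forall] at hmatch
    obtain ⟨v, x, hx, y, hy, hxy⟩ := hmatch
    exact .inl (contains_pathGraph_three hx hy hxy)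
end

section
/- Let n ≥ 12 be even, let t = (n − 2)/2, and let F_n be the simple graph with vertex set {x, y} ∪ {u_1, ..., u_t} ∪ {v_1, ..., v_t} and edge set {x u_1, x v_1, x u_3, u_t y, v_t y, v_{t−2} y} ∪ {u_i u_{i+1}, v_i v_{i+1}, v_i u_{i+1}, u_i v_{i+1} : 1 ≤ i ≤ t − 1}. Then F_n has n vertices and 2n − 2 edges, and F_n → (P_3, C_n). -/
open SimpleGraph

/-- Vertex type of the construction: `x`, `y`, and `uᵢ`, `vᵢ` for `i : Fin t`
(`uᵢ` of the paper, `1 ≤ i ≤ t`, is `u ⟨i - 1⟩`). -/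
abbrev Vt (t : ℕ) := (Unit ⊕ Unit) ⊕ (Fin t ⊕ Fin t)

def vx {t : ℕ} : Vt t := Sum.inl (Sum.inl ())
def vy {t : ℕ} : Vt t := Sum.inl (Sum.inr ())
def vu {t : ℕ} (i : Fin t) : Vt t := Sum.inr (Sum.inl i)
def vv {t : ℕ} (i : Fin t) : Vt t := Sum.inr (Sum.inr i)

/-- Edges `uᵢuᵢ₊₁, vᵢvᵢ₊₁, vᵢuᵢ₊₁, uᵢvᵢ₊₁` for `1 ≤ i ≤ t - 1` (0-based here). -/
def ladderEdges (t : ℕ) : Set (Sym2 (Vt t)) :=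
  { e | ∃ i j : Fin t, (j : ℕ) = (i : ℕ) + 1 ∧
      (e = s(vu i, vu j) ∨ e = s(vv i, vv j) ∨ e = s(vv i, vu j) ∨ e = s(vu i, vv j)) }

/-- The graph `Fₙ` with the extra edges `x u₁, x v₁, x u₃, uₜ y, vₜ y, vₜ₋₂ y`. -/
def Fgraph (t : ℕ) : SimpleGraph (Vt t) :=
  fromEdgeSet
    ({ e | ∃ i : Fin t,
        ((i : ℕ) = 0 ∧ (e = s(vx, vu i) ∨ e = s(vx, vv i))) ∨
        ((i : ℕ) = 2 ∧ e = s(vx, vu i)) ∨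
        ((i : ℕ) = t - 1 ∧ (e = s(vu i, vy) ∨ e = s(vv i, vy))) ∨
        ((i : ℕ) = t - 3 ∧ e = s(vv i, vy)) } ∪ ladderEdges t)

/-!
With no red `P₃` the red edges form a matching, and we find a blue Hamiltonian cycle. The edges
between consecutive columns `{uᵢ, vᵢ}` and `{uᵢ₊₁, vᵢ₊₁}` form a `K₂,₂`, and one of its two perfect
matchings is blue, so a blue path from `uᵢ` to `vᵢ` through the columns before `i` extends to one
from `uᵢ₊₁` to `vᵢ₊₁`. It starts at `x`: if `x u₁` and `x v₁` are blue, it is `u₁ x v₁`; otherwise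
`x` has exactly one red edge, hence `x u₃` is blue, and the matching leaves a blue path from `u₃`
through `x` and the first two columns to `v₃`. Symmetrically there is a blue path through `y` and
the last columns between the two vertices of column `t - 2` or `t`, and the two paths close up to a
Hamiltonian cycle.
-/

lemma contains_iff_isContained {α β : Type*} {F : SimpleGraph α} {G : SimpleGraph β} :
    Contains F G ↔ G ⊑ F :=
  ⟨fun ⟨f, hf⟩ => ⟨⟨f, hf⟩⟩, fun ⟨f⟩ => ⟨f.toHom, f.injective⟩⟩

namespace SimpleGraph

variable {α : Type*}

def AtMostOneNeighbor (R : SimpleGraph α) : Prop :=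
  ∀ ⦃a b c : α⦄, R.Adj a b → R.Adj a c → b = c

lemma atMostOneNeighbor_of_not_isContained_pathGraph_three {R : SimpleGraph α}
    (h : ¬ pathGraph 3 ⊑ R) : AtMostOneNeighbor R := by
  intro a b c hab hac
  by_contra hbc
  let p : R.Walk b c := Walk.cons hab.symm (Walk.cons hac Walk.nil)
  have hp : p.IsPath := by simp [p, Walk.isPath_def, hab.ne.symm, hac.ne, hbc]
  exact h hp.isContained_pathGraph

def CompletelyJoined (F : SimpleGraph α) (a b c d : α) : Prop :=
  F.Adj a c ∧ F.Adj a d ∧ F.Adj b c ∧ F.Adj b d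

lemma CompletelyJoined.symm {F : SimpleGraph α} {a b c d : α} (h : CompletelyJoined F a b c d) :
    CompletelyJoined F c d a b :=
  ⟨h.1.symm, h.2.2.1.symm, h.2.1.symm, h.2.2.2.symm⟩

lemma CompletelyJoined.swap {F : SimpleGraph α} {a b c d : α} (h : CompletelyJoined F a b c d) :
    CompletelyJoined F b a c d :=
  ⟨h.2.2.1, h.2.2.2, h.1, h.2.1⟩

section Matching

variable {F R : SimpleGraph α} (hR : AtMostOneNeighbor R)
include hR

lemma AtMostOneNeighbor.sdiff_adj {a b c : α} (hab : R.Adj a b) (hac : F.Adj a c) (hcb : c ≠ b) :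
    (F \ R).Adj a c :=
  ⟨hac, fun h => hcb (hR h hab)⟩

lemma AtMostOneNeighbor.sdiff_adj_or {a b c d : α} (hJ : CompletelyJoined F a b c d)
    (hab : a ≠ b) (hcd : c ≠ d) :
    ((F \ R).Adj a c ∧ (F \ R).Adj b d) ∨ ((F \ R).Adj a d ∧ (F \ R).Adj b c) := by
  obtain ⟨hac, had, hbc, hbd⟩ := hJ
  by_cases hred : R.Adj a c ∨ R.Adj b d
  · right
    rcases hred with h | h
    · exact ⟨hR.sdiff_adj h had hcd.symm, ⟨hbc, fun h' => hab (hR h'.symm h.symm).symm⟩⟩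
    · exact ⟨⟨had, fun h' => hab (hR h'.symm h.symm)⟩, hR.sdiff_adj h hbc hcd⟩
  · obtain ⟨hac', hbd'⟩ := not_or.mp hred
    exact Or.inl ⟨⟨hac, hac'⟩, ⟨hbd, hbd'⟩⟩

end Matching

/-- `a` and `b` are joined by a path `a, c, …, d, b` whose inner part `c, …, d` is a path of
length `m` inside `S`. -/
def LinkedThrough (G : SimpleGraph α) (a b : α) (S : Set α) (m : ℕ) : Prop :=
  ∃ (c d : α) (p : G.Walk c d), p.IsPath ∧ p.length = m ∧ G.Adj a c ∧ G.Adj d b ∧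
    ∀ z ∈ p.support, z ∈ S

namespace LinkedThrough

variable {G : SimpleGraph α} {a b : α} {S T : Set α} {m k : ℕ}

lemma symm (h : LinkedThrough G a b S m) : LinkedThrough G b a S m := by
  obtain ⟨c, d, p, hp, hlen, hac, hdb, hS⟩ := h
  exact ⟨d, c, p.reverse, hp.reverse, by simpa using hlen, hdb.symm, hac.symm, by simpa using hS⟩

lemma mono (h : LinkedThrough G a b S m) (hST : S ⊆ T) : LinkedThrough G a b T m := by
  obtain ⟨c, d, p, hp, hlen, hac, hdb, hS⟩ := h
  exact ⟨c, d, p, hp, hlen, hac, hdb, fun z hz => hST (hS z hz)⟩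

lemma exists_isPath (h : LinkedThrough G a b S m) (ha : a ∉ S) (hb : b ∉ S) (hab : a ≠ b) :
    ∃ P : G.Walk a b, P.IsPath ∧ P.length = m + 2 ∧ ∀ z ∈ P.support.tail, z = b ∨ z ∈ S := by
  obtain ⟨c, d, p, hp, hlen, hac, hdb, hS⟩ := h
  refine ⟨Walk.cons hac (p.concat hdb), ?_, by simp [hlen], ?_⟩
  · refine (hp.concat (fun hb' => hb (hS b hb')) hdb).cons ?_
    simp only [Walk.support_concat, List.mem_append, List.mem_singleton, not_or]
    exact ⟨fun ha' => ha (hS a ha'), hab⟩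
  · intro z hz
    simp only [Walk.support_cons, List.tail_cons, Walk.support_concat,
      List.mem_append, List.mem_singleton] at hz
    exact hz.elim (fun hz => Or.inr (hS z hz)) Or.inl

lemma extend {a' b' : α} {S' : Set α} (h : LinkedThrough G a b S m) (ha' : G.Adj a' a)
    (hb' : G.Adj b b') (ha : a ∉ S) (hb : b ∉ S) (hab : a ≠ b) (hS : S ⊆ S') (haS' : a ∈ S')
    (hbS' : b ∈ S') : LinkedThrough G a' b' S' (m + 2) := by
  obtain ⟨P, hP, hlen, hsupp⟩ := h.exists_isPath ha hb hab
  refine ⟨a, b, P, hP, hlen, ha', hb', fun z hz => ?_⟩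
  rw [← Walk.cons_tail_support, List.mem_cons] at hz
  rcases hz with rfl | hz
  · exact haS'
  · exact (hsupp z hz).elim (· ▸ hbS') (fun h => hS h)

lemma isContained_cycleGraph (h₁ : LinkedThrough G a b S m) (h₂ : LinkedThrough G a b T k)
    (hST : Disjoint S T) (haS : a ∉ S) (hbS : b ∉ S) (haT : a ∉ T) (hbT : b ∉ T) (hab : a ≠ b) :
    cycleGraph (m + k + 4) ⊑ G := by
  obtain ⟨P, hP, hPlen, hPsupp⟩ := h₁.exists_isPath haS hbS hab
  obtain ⟨Q, hQ, hQlen, hQsupp⟩ := h₂.symm.exists_isPath hbT haT hab.symm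
  refine (cycleGraph_isContained_iff (by omega)).mpr
    ⟨a, P.append Q, ?_, by rw [Walk.length_append, hPlen, hQlen]; omega⟩
  refine hP.isCycle_append hQ (fun z hzP hzQ => ?_) (Or.inl (by omega))
  rcases hPsupp z hzP with rfl | hzS <;> rcases hQsupp z hzQ with rfl | hzT
  · exact hab rfl
  · exact hbT hzT
  · exact haS hzS
  · exact Set.disjoint_left.mp hST hzS hzT

end LinkedThrough

variable {F R : SimpleGraph α}

lemma LinkedThrough.extend_of_completelyJoined (hR : AtMostOneNeighbor R) {a b a' b' : α}
    {S S' : Set α} {m : ℕ} (h : LinkedThrough (F \ R) a b S m)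
    (hJ : CompletelyJoined F a b a' b') (ha : a ∉ S) (hb : b ∉ S) (hab : a ≠ b) (ha'b' : a' ≠ b')
    (hS : S ⊆ S') (haS' : a ∈ S') (hbS' : b ∈ S') : LinkedThrough (F \ R) a' b' S' (m + 2) := by
  rcases hR.sdiff_adj_or hJ hab ha'b' with ⟨haa', hbb'⟩ | ⟨hab', hba'⟩
  · exact h.extend haa'.symm hbb' ha hb hab hS haS' hbS'
  · exact h.symm.extend hba'.symm hab' hb ha hab.symm hS hbS' haS'

section EndGadget

variable (hR : AtMostOneNeighbor R) {w a₀ b₀ a₁ b₁ a₂ b₂ : α}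
  (hd : [w, a₀, b₀, a₁, b₁, a₂, b₂].Nodup) (hb₀ : F.Adj w b₀) (ha₂ : F.Adj w a₂)
  (hJ₀ : CompletelyJoined F a₀ b₀ a₁ b₁) (hJ₁ : CompletelyJoined F a₁ b₁ a₂ b₂)
include hR hd hb₀ ha₂ hJ₀ hJ₁

/-- The witness is `a₂, w, b₀, a₁, a₀, b₁, b₂` or `a₂, w, b₀, b₁, a₀, a₁, b₂`. -/
lemma linkedThrough_of_adj (hwa₀ : R.Adj w a₀) :
    LinkedThrough (F \ R) a₂ b₂ {w, a₀, b₀, a₁, b₁} 4 := by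
  have hwb₀ := hR.sdiff_adj hwa₀ hb₀ (by rintro rfl; simp at hd)
  have hwa₂ := hR.sdiff_adj hwa₀ ha₂ (by rintro rfl; simp at hd)
  have ha₀a₁ := hR.sdiff_adj hwa₀.symm hJ₀.1 (by rintro rfl; simp at hd)
  have ha₀b₁ := hR.sdiff_adj hwa₀.symm hJ₀.2.1 (by rintro rfl; simp at hd)
  have hJ : CompletelyJoined F b₀ b₂ a₁ b₁ := ⟨hJ₀.2.2.1, hJ₀.2.2.2, hJ₁.2.1.symm, hJ₁.2.2.2.symm⟩
  rcases hR.sdiff_adj_or hJ (by rintro rfl; simp at hd) (by rintro rfl; simp at hd) with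
    ⟨h₁, h₂⟩ | ⟨h₁, h₂⟩
  · refine ⟨w, b₁, .cons hwb₀ (.cons h₁ (.cons ha₀a₁.symm (.cons ha₀b₁ .nil))), ?_, rfl,
      hwa₂.symm, h₂.symm, by simp⟩
    simp only [List.nodup_cons, List.mem_cons, List.not_mem_nil, or_false, not_or] at hd
    simp_all [Walk.isPath_def, eq_comm]
  · refine ⟨w, a₁, .cons hwb₀ (.cons h₁ (.cons ha₀b₁.symm (.cons ha₀a₁ .nil))), ?_, rfl,
      hwa₂.symm, h₂.symm, by simp⟩
    simp only [List.nodup_cons, List.mem_cons, List.not_mem_nil, or_false, not_or] at hd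
    simp_all [Walk.isPath_def, eq_comm]

lemma linkedThrough_or (ha₀ : F.Adj w a₀) :
    LinkedThrough (F \ R) a₀ b₀ {w} 0 ∨ LinkedThrough (F \ R) a₂ b₂ {w, a₀, b₀, a₁, b₁} 4 := by
  by_cases hwa₀ : R.Adj w a₀
  · exact Or.inr (linkedThrough_of_adj hR hd hb₀ ha₂ hJ₀ hJ₁ hwa₀)
  by_cases hwb₀ : R.Adj w b₀
  · right
    have hd' : [w, b₀, a₀, a₁, b₁, a₂, b₂].Nodup := ((List.Perm.swap _ _ _).cons w).nodup_iff.mp hd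
    have := linkedThrough_of_adj hR hd' ha₀ ha₂ hJ₀.swap hJ₁ hwb₀
    rwa [Set.insert_comm b₀] at this
  · exact Or.inl ⟨w, w, .nil, .nil, rfl, ⟨ha₀.symm, fun h => hwa₀ h.symm⟩, ⟨hb₀, hwb₀⟩, by simp⟩

end EndGadget

end SimpleGraph

namespace Fgraph

variable {t : ℕ}

/-- The paper's index of a vertex; `U i`, `V i` below are 0-based, so `col (U i) = i + 1`. -/
def col : Vt t → ℕ
  | Sum.inl (Sum.inl _) => 0
  | Sum.inl (Sum.inr _) => t + 1
  | Sum.inr (Sum.inl i) => i + 1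
  | Sum.inr (Sum.inr i) => i + 1

@[simp] lemma col_vx : col (vx : Vt t) = 0 := rfl
@[simp] lemma col_vy : col (vy : Vt t) = t + 1 := rfl
@[simp] lemma vx_ne_vy : (vx : Vt t) ≠ vy := by simp [vx, vy]

variable [NeZero t]

def U (i : ℕ) : Vt t := vu (Fin.ofNat t i)
def V (i : ℕ) : Vt t := vv (Fin.ofNat t i)

lemma col_U {i : ℕ} (h : i < t) : col (U i : Vt t) = i + 1 := by
  simp [U, vu, col, Nat.mod_eq_of_lt h]
lemma col_V {i : ℕ} (h : i < t) : col (V i : Vt t) = i + 1 := by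
  simp [V, vv, col, Nat.mod_eq_of_lt h]

@[simp] lemma U_ne_V (i j : ℕ) : (U i : Vt t) ≠ V j := by simp [U, V, vu, vv]
@[simp] lemma V_ne_U (i j : ℕ) : (V i : Vt t) ≠ U j := by simp [U, V, vu, vv]

lemma U_inj {i j : ℕ} (hi : i < t) (hj : j < t) : (U i : Vt t) = U j ↔ i = j := by
  simp [U, vu, Fin.ext_iff, Nat.mod_eq_of_lt hi, Nat.mod_eq_of_lt hj]
lemma V_inj {i j : ℕ} (hi : i < t) (hj : j < t) : (V i : Vt t) = V j ↔ i = j := by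
  simp [V, vv, Fin.ext_iff, Nat.mod_eq_of_lt hi, Nat.mod_eq_of_lt hj]

@[simp] lemma vx_ne_U (i : ℕ) : (vx : Vt t) ≠ U i := by simp [U, vu, vx]
@[simp] lemma vx_ne_V (i : ℕ) : (vx : Vt t) ≠ V i := by simp [V, vv, vx]
@[simp] lemma vy_ne_U (i : ℕ) : (vy : Vt t) ≠ U i := by simp [U, vu, vy]
@[simp] lemma vy_ne_V (i : ℕ) : (vy : Vt t) ≠ V i := by simp [V, vv, vy]
@[simp] lemma U_ne_vy (i : ℕ) : (U i : Vt t) ≠ vy := (vy_ne_U i).symm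
@[simp] lemma V_ne_vy (i : ℕ) : (V i : Vt t) ≠ vy := (vy_ne_V i).symm

lemma vu_eq_U (i : Fin t) : vu i = U i := by simp [U]
lemma vv_eq_V (i : Fin t) : vv i = V i := by simp [V]

def connectorEdges (t : ℕ) [NeZero t] : Finset (Sym2 (Vt t)) :=
  {s(vx, U 0), s(vx, V 0), s(vx, U 2), s(U (t - 1), vy), s(V (t - 1), vy), s(V (t - 3), vy)}

def ladderBlock (i : ℕ) : Finset (Sym2 (Vt t)) :=
  {s(U i, U (i + 1)), s(V i, V (i + 1)), s(V i, U (i + 1)), s(U i, V (i + 1))}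

lemma ladderEdges_eq :
    ladderEdges t = ↑((Finset.range (t - 1)).biUnion (ladderBlock (t := t))) := by
  ext e
  simp only [ladderEdges, ladderBlock, Set.mem_ofPred_eq, Finset.coe_biUnion, Finset.coe_range,
    Set.mem_Iio, Finset.coe_insert, Finset.coe_singleton, Set.mem_iUnion, Set.mem_insert_iff,
    Set.mem_singleton_iff, exists_prop]
  constructor
  · rintro ⟨i, j, hij, he⟩
    refine ⟨i, by omega, ?_⟩
    simpa only [vu_eq_U, vv_eq_V, hij] using he
  · rintro ⟨i, hi, he⟩
    refine ⟨Fin.ofNat t i, Fin.ofNat t (i + 1), ?_, he⟩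
    simp [Nat.mod_eq_of_lt (by omega : i < t), Nat.mod_eq_of_lt (by omega : i + 1 < t)]

lemma eq_fromEdgeSet (ht : 3 ≤ t) :
    Fgraph t = fromEdgeSet (↑(connectorEdges t ∪ (Finset.range (t - 1)).biUnion ladderBlock)) := by
  rw [Fgraph, Finset.coe_union, ← ladderEdges_eq]
  congr 2
  ext e
  simp only [connectorEdges, Set.mem_ofPred_eq, Finset.coe_insert, Finset.coe_singleton,
    Set.mem_insert_iff, Set.mem_singleton_iff]
  constructor
  · rintro ⟨i, (⟨h, rfl | rfl⟩ | ⟨h, rfl⟩ | ⟨h, rfl | rfl⟩ | ⟨h, rfl⟩)⟩ <;>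
      simp [vu_eq_U, vv_eq_V, h]
  · rintro (rfl | rfl | rfl | rfl | rfl | rfl)
    · exact ⟨Fin.ofNat t 0, by simp [U]⟩
    · exact ⟨Fin.ofNat t 0, by simp [V]⟩
    · exact ⟨Fin.ofNat t 2, by simp [U, Nat.mod_eq_of_lt (by omega : 2 < t)]⟩
    · exact ⟨Fin.ofNat t (t - 1), by simp [U, Nat.mod_eq_of_lt (by omega : t - 1 < t)]⟩
    · exact ⟨Fin.ofNat t (t - 1), by simp [V, Nat.mod_eq_of_lt (by omega : t - 1 < t)]⟩
    · exact ⟨Fin.ofNat t (t - 3), by simp [V, Nat.mod_eq_of_lt (by omega : t - 3 < t)]⟩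

lemma edgeSet_eq (ht : 3 ≤ t) :
    (Fgraph t).edgeSet = ↑(connectorEdges t ∪ (Finset.range (t - 1)).biUnion ladderBlock) := by
  rw [eq_fromEdgeSet ht, edgeSet_fromEdgeSet, sdiff_eq_left, Set.disjoint_left]
  intro e he
  simp only [Finset.coe_union, Set.mem_union, Finset.mem_coe, Finset.mem_biUnion,
    Finset.mem_range] at he
  rcases he with he | ⟨i, hi, he⟩
  · simp only [connectorEdges, Finset.mem_insert, Finset.mem_singleton] at he
    rcases he with rfl | rfl | rfl | rfl | rfl | rfl <;> simp
  · simp only [ladderBlock, Finset.mem_insert, Finset.mem_singleton] at he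
    rcases he with rfl | rfl | rfl | rfl <;> simp (disch := omega) [U_inj, V_inj]

lemma ncard_edgeSet (ht : 5 ≤ t) : (Fgraph t).edgeSet.ncard = 4 * t + 2 := by
  have hC : (connectorEdges t).card = 6 := by
    simp (disch := omega) [connectorEdges, Finset.card_insert_eq_ite, U_inj, V_inj,
      show t - 1 ≠ t - 3 by omega]
  have hL : ((Finset.range (t - 1)).biUnion (ladderBlock (t := t))).card = 4 * (t - 1) := by
    rw [Finset.card_biUnion]
    · rw [Finset.sum_congr rfl (g := fun _ => 4), Finset.sum_const, Finset.card_range,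
        smul_eq_mul, mul_comm]
      intro i hi
      simp only [Finset.mem_range] at hi
      simp (disch := omega) [ladderBlock, Finset.card_insert_eq_ite, U_inj, V_inj]
    · intro i hi j hj hij
      simp only [Finset.coe_range, Set.mem_Iio] at hi hj
      rw [Function.onFun, Finset.disjoint_left]
      simp +contextual (disch := omega) [ladderBlock, U_inj, V_inj, hij, add_assoc]
  have hdisj : Disjoint (connectorEdges t) ((Finset.range (t - 1)).biUnion ladderBlock) := by
    rw [Finset.disjoint_left]
    simp [connectorEdges, ladderBlock]
  rw [edgeSet_eq (by omega), Set.ncard_coe_finset, Finset.card_union_of_disjoint hdisj, hC, hL]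
  omega

lemma adj_of_mem (ht : 3 ≤ t) {a b : Vt t}
    (h : s(a, b) ∈ connectorEdges t ∪ (Finset.range (t - 1)).biUnion ladderBlock) :
    (Fgraph t).Adj a b := by
  rwa [← mem_edgeSet, edgeSet_eq ht]

lemma completelyJoined (ht : 3 ≤ t) {i j : ℕ} (hij : i + 1 = j) (hj : j < t) :
    CompletelyJoined (Fgraph t) (U i) (V i) (U j) (V j) := by
  subst hij
  have hmem {a b : Vt t} (h : s(a, b) ∈ ladderBlock i) : (Fgraph t).Adj a b :=
    adj_of_mem ht <| Finset.mem_union_right _ <|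
      Finset.mem_biUnion.mpr ⟨i, Finset.mem_range.mpr (by omega), h⟩
  exact ⟨hmem (by simp [ladderBlock]), hmem (by simp [ladderBlock]),
    hmem (by simp [ladderBlock]), hmem (by simp [ladderBlock])⟩

lemma adj_vx (ht : 3 ≤ t) :
    (Fgraph t).Adj vx (U 0) ∧ (Fgraph t).Adj vx (V 0) ∧ (Fgraph t).Adj vx (U 2) :=
  ⟨adj_of_mem ht (by simp [connectorEdges]), adj_of_mem ht (by simp [connectorEdges]),
    adj_of_mem ht (by simp [connectorEdges])⟩

lemma adj_vy (ht : 3 ≤ t) :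
    (Fgraph t).Adj vy (U (t - 1)) ∧ (Fgraph t).Adj vy (V (t - 1)) ∧ (Fgraph t).Adj vy (V (t - 3)) :=
  ⟨(adj_of_mem ht (by simp [connectorEdges])).symm, (adj_of_mem ht (by simp [connectorEdges])).symm,
    (adj_of_mem ht (by simp [connectorEdges])).symm⟩

section Links

variable {R : SimpleGraph (Vt t)} (hR : AtMostOneNeighbor R)
include hR

lemma exists_linkedThrough_left (ht : 3 ≤ t) :
    ∃ l ≤ 2, LinkedThrough (Fgraph t \ R) (U l) (V l) {z | col z ≤ l} (2 * l) := by
  obtain ⟨hU₀, hV₀, hU₂⟩ := adj_vx ht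
  have hd : [vx, U 0, V 0, U 1, V 1, U 2, (V 2 : Vt t)].Nodup := by
    simp (disch := omega) [U_inj, V_inj]
  rcases linkedThrough_or hR hd hV₀ hU₂ (completelyJoined ht rfl (by omega))
    (completelyJoined ht rfl (by omega)) hU₀ with h | h
  · exact ⟨0, by omega, h.mono (by simp)⟩
  · exact ⟨2, le_rfl, h.mono (by simp (disch := omega) [Set.insert_subset_iff, col_U, col_V])⟩

lemma linkedThrough_left_succ {i : ℕ} (ht : 3 ≤ t) (hi : i + 1 < t)
    (h : LinkedThrough (Fgraph t \ R) (U i) (V i) {z | col z ≤ i} (2 * i)) :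
    LinkedThrough (Fgraph t \ R) (U (i + 1)) (V (i + 1)) {z | col z ≤ i + 1} (2 * (i + 1)) :=
  h.extend_of_completelyJoined hR (completelyJoined ht rfl hi)
    (by simp [col_U (Nat.lt_of_succ_lt hi)]) (by simp [col_V (Nat.lt_of_succ_lt hi)])
    (U_ne_V i i) (U_ne_V _ _) (fun z hz => Nat.le_succ_of_le hz)
    (by simp [col_U (Nat.lt_of_succ_lt hi)]) (by simp [col_V (Nat.lt_of_succ_lt hi)])

lemma linkedThrough_left (ht : 3 ≤ t) {i : ℕ} (h2 : 2 ≤ i) (hi : i < t) :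
    LinkedThrough (Fgraph t \ R) (U i) (V i) {z | col z ≤ i} (2 * i) := by
  obtain ⟨l, hl, h⟩ := exists_linkedThrough_left hR ht
  have hli : l ≤ i := hl.trans h2
  clear h2
  induction i, hli using Nat.le_induction with
  | base => exact h
  | succ i _ ih => exact linkedThrough_left_succ hR ht hi (ih (by omega))

lemma exists_linkedThrough_right (ht : 5 ≤ t) : ∃ r, 2 ≤ r ∧ r < t ∧
    LinkedThrough (Fgraph t \ R) (U r) (V r) {z | r + 1 < col z} (2 * (t - 1 - r)) := by
  obtain ⟨s, rfl⟩ : ∃ s, t = s + 3 := ⟨t - 3, by omega⟩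
  obtain ⟨hU₀, hV₀, hV₂⟩ := adj_vy (by omega : 3 ≤ s + 3)
  simp only [Nat.add_sub_cancel, show s + 3 - 1 = s + 2 by omega] at hU₀ hV₀ hV₂
  have hd : [vy, U (s + 2), V (s + 2), U (s + 1), V (s + 1), V s, (U s : Vt (s + 3))].Nodup := by
    simp (disch := omega) [U_inj, V_inj]
  have hJ₀ := (completelyJoined (t := s + 3) (i := s + 1) (by omega) rfl (by omega)).symm
  have hJ₁ := (completelyJoined (t := s + 3) (i := s) (by omega) rfl (by omega)).swap.symm
  rcases linkedThrough_or hR hd hV₀ hV₂ hJ₀ hJ₁ hU₀ with h | h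
  · refine ⟨s + 2, by omega, by omega, ?_⟩
    simpa using h.mono (T := {z | s + 2 + 1 < col z}) (by simp)
  · refine ⟨s, by omega, by omega, ?_⟩
    simpa using h.symm.mono (T := {z | s + 1 < col z})
      (by simp (disch := omega) [Set.insert_subset_iff, col_U, col_V])

theorem isContained_cycleGraph (ht : 5 ≤ t) : cycleGraph (2 * t + 2) ⊑ Fgraph t \ R := by
  obtain ⟨r, hr2, hrt, hright⟩ := exists_linkedThrough_right hR ht
  have hleft := linkedThrough_left hR (by omega) hr2 hrt
  have := hleft.isContained_cycleGraph hright
    (Set.disjoint_left.mpr fun z (hz : col z ≤ r) (hz' : r + 1 < col z) => by omega)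
    (by simp [col_U hrt]) (by simp [col_V hrt]) (by simp [col_U hrt]) (by simp [col_V hrt])
    (U_ne_V r r)
  rwa [show 2 * r + 2 * (t - 1 - r) + 4 = 2 * t + 2 by omega] at this

end Links

end Fgraph

theorem stmt_5 (n t : ℕ) (hn : 12 ≤ n) (he : Even n) (ht : t = (n - 2) / 2) :
    Fintype.card (Vt t) = n ∧ (Fgraph t).edgeSet.ncard = 2 * n - 2 ∧
      Arrows (Fgraph t) (pathGraph 3) (cycleGraph n) := by
  obtain ⟨k, rfl⟩ := he
  have ht5 : 5 ≤ t := by omega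
  have : NeZero t := ⟨by omega⟩
  refine ⟨by simp only [Fintype.card_sum, Fintype.card_unit, Fintype.card_fin]; omega,
    by rw [Fgraph.ncard_edgeSet ht5]; omega, fun R _ => ?_⟩
  rw [contains_iff_isContained, contains_iff_isContained, show k + k = 2 * t + 2 by omega]
  by_cases hP : pathGraph 3 ⊑ R
  · exact Or.inl hP
  · exact Or.inr (Fgraph.isContained_cycleGraph
      (atMostOneNeighbor_of_not_isContained_pathGraph_three hP) ht5)
end

section
/- For every even integer n ≥ 12, the restricted size Ramsey number satisfies r*(P_3, P_n) ≤ 2n − 3; that is, there exists a simple graph F on n vertices with 2n − 3 edges such that F → (P_3, P_n). -/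
open SimpleGraph

/-!
A colouring with no red `P₃` has a red graph `M` that is a matching, so it suffices to find a
host graph on `n` vertices with `2n - 3` edges in which every matching `M` is avoided by some
Hamiltonian path. Take the square of the path `0, 1, …, n - 1` with the chord `{0, 2}` removed and
the edge `{0, n - 1}` added.

In the square of a path `v₀, …, v_d` whose last edge is not in `M` there is a Hamiltonian path
from `v₀` avoiding `M`: step to `v₁` if `v₀v₁ ∉ M`, and otherwise take the detour
`v₀, v₂, v₁, v₃`, which avoids `M` because `v₀` and `v₁` are matched to each other. Depending on
which of `{0, 1}`, `{1, 2}`, `{n - 2, n - 1}` lie in `M`, one of the prefixes `0`, `0, n - 1`, or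
`1, 0, n - 1, n - 3, n - 2` reduces the host graph to this situation.
-/

section

variable {V W : Type*}

namespace SimpleGraph

theorem ncard_edgeSet_comap {G : SimpleGraph W} {f : V → W} (hf : Function.Injective f)
    (hG : G.support ⊆ Set.range f) : (G.comap f).edgeSet.ncard = G.edgeSet.ncard := by
  have hmap : (G.comap f).map (⟨f, hf⟩ : V ↪ W) = G := by
    refine le_antisymm (map_comap_le _ G) fun a b hab => ?_
    obtain ⟨a', rfl⟩ := hG ⟨b, hab⟩
    obtain ⟨b', rfl⟩ := hG ⟨_, hab.symm⟩
    exact (map_adj _ _ _ _).2 ⟨a', b', hab, rfl, rfl⟩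
  conv_rhs => rw [← hmap]
  rw [edgeSet_map, Set.ncard_image_of_injective _ (Function.Embedding.injective _)]

theorem comap_sdiff_map (f : V ↪ W) (G : SimpleGraph W) (R : SimpleGraph V) :
    (G \ R.map f).comap f = G.comap f \ R := by
  ext a b
  simp

end SimpleGraph

theorem contains_pathGraph_of_isChain {H : SimpleGraph V} {L : List V} {m : ℕ}
    (hL : L.IsChain H.Adj) (hnd : L.Nodup) (hlen : L.length = m) : Contains H (pathGraph m) := by
  subst hlen
  refine ⟨⟨fun i => L[i], fun {i j} hij => ?_⟩, fun i j hij => Fin.ext (hnd.getElem_inj_iff.1 hij)⟩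
  rcases (pathGraph_adj).1 hij with h | h
  · simpa [← h] using List.isChain_iff_getElem.1 hL i (by omega)
  · simpa [← h] using (List.isChain_iff_getElem.1 hL j (by omega)).symm

theorem contains_comap_val_of_perm_range {G : SimpleGraph ℕ} {L : List ℕ} {n : ℕ}
    (hL : L.IsChain G.Adj) (hperm : L.Perm (List.range n)) :
    Contains (G.comap (Fin.val : Fin n → ℕ)) (pathGraph n) := by
  have hlt : ∀ a ∈ L, a < n := fun a ha => List.mem_range.1 (hperm.subset ha)
  have hchain : (L.pmap Fin.mk hlt).IsChain (G.comap (Fin.val : Fin n → ℕ)).Adj :=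
    (List.isChain_pmap _ _).2 (hL.imp_of_mem_imp fun a b ha hb h => ⟨hlt a ha, hlt b hb, h⟩)
  have hnd : (L.pmap Fin.mk hlt).Nodup :=
    (hperm.nodup_iff.2 List.nodup_range).pmap fun _ _ _ _ h => Fin.val_eq_of_eq h
  exact contains_pathGraph_of_isChain hchain hnd (by simp [hperm.length_eq])

def IsMatchingGraph (M : SimpleGraph V) : Prop :=
  ∀ ⦃x y z⦄, M.Adj x y → M.Adj x z → y = z

theorem IsMatchingGraph.not_adj {M : SimpleGraph V} (hM : IsMatchingGraph M) {x y z : V}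
    (hxy : M.Adj x y) (hzy : z ≠ y) : ¬ M.Adj x z :=
  fun hxz => hzy (hM hxy hxz).symm

theorem IsMatchingGraph.map {M : SimpleGraph V} (hM : IsMatchingGraph M) (f : V ↪ W) :
    IsMatchingGraph (M.map f) := by
  intro _ _ _ hxy hxz
  obtain ⟨x, y, hxy', rfl, rfl⟩ := (map_adj f M _ _).1 hxy
  obtain ⟨x', z, hxz', hx, rfl⟩ := (map_adj f M _ _).1 hxz
  rw [f.injective hx] at hxz'
  rw [hM hxy' hxz']

theorem isMatchingGraph_of_not_contains_pathGraph_three {M : SimpleGraph V}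
    (h : ¬ Contains M (pathGraph 3)) : IsMatchingGraph M := by
  intro x y z hxy hxz
  by_contra hyz
  refine h (contains_pathGraph_of_isChain (L := [y, x, z]) ?_ ?_ rfl)
  · simp [hxy.symm, hxz]
  · simp [hxz.ne, hxy.ne.symm, hyz]

theorem exists_isChain_perm_of_square {G M : SimpleGraph V} (hM : IsMatchingGraph M) (d : ℕ)
    (f : ℕ → V) (hf : Set.InjOn f (Set.Iic d))
    (hstep : ∀ k < d, G.Adj (f k) (f (k + 1)))
    (hchord : ∀ k, k + 2 ≤ d → G.Adj (f k) (f (k + 2)))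
    (hlast : ∀ k, k + 1 = d → ¬ M.Adj (f k) (f (k + 1))) :
    ∃ L, (f 0 :: L).IsChain (G \ M).Adj ∧ (f 0 :: L).Perm ((List.range (d + 1)).map f) := by
  induction d using Nat.strong_induction_on generalizing f with | _ d ih => ?_
  have hne : ∀ i j, i ≤ d → j ≤ d → i ≠ j → f i ≠ f j := fun i j hi hj => hf.ne hi hj
  have hshift : ∀ s e, s + e = d → Set.InjOn (fun k => f (s + k)) (Set.Iic e) := fun s e hse =>
    hf.comp (add_right_injective s).injOn fun k hk => by simp only [Set.mem_Iic] at hk ⊢; omega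
  rcases d with _ | e
  · exact ⟨[], by simp, by simp⟩
  by_cases h01 : M.Adj (f 0) (f 1)
  · have he : 1 ≤ e := Nat.pos_of_ne_zero (by rintro rfl; exact hlast 0 rfl h01)
    have h02 : ¬ M.Adj (f 0) (f 2) := hM.not_adj h01 (hne 2 1 (by omega) (by omega) (by omega))
    have h21 : ¬ M.Adj (f 2) (f 1) := by
      rw [adj_comm]; exact hM.not_adj h01.symm (hne 2 0 (by omega) (by omega) (by omega))
    rcases e with _ | _ | e
    · omega
    · refine ⟨[f 2, f 1], ?_, (List.Perm.swap (f 1) (f 2) []).cons (f 0)⟩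
      simp only [List.isChain_cons_cons, List.isChain_singleton, sdiff_adj]
      exact ⟨⟨hchord 0 le_rfl, h02⟩, ⟨(hstep 1 (by omega)).symm, h21⟩, trivial⟩
    · obtain ⟨L, hL, hperm⟩ := ih e (by omega) (fun k => f (3 + k)) (hshift 3 e (by omega))
        (fun k hk => hstep (3 + k) (by omega)) (fun k hk => hchord (3 + k) (by omega))
        (fun k hk => hlast (3 + k) (by omega))
      refine ⟨f 2 :: f 1 :: f 3 :: L, ?_, ?_⟩
      · simp only [List.isChain_cons_cons, sdiff_adj]
        exact ⟨⟨hchord 0 (by omega), h02⟩, ⟨(hstep 1 (by omega)).symm, h21⟩,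
          ⟨hchord 1 (by omega), hM.not_adj h01.symm (hne 3 0 (by omega) (by omega) (by omega))⟩, hL⟩
      · rw [show e + 2 + 1 + 1 = 3 + (e + 1) by omega, List.range_add, List.map_append,
          List.map_map]
        exact ((List.Perm.swap _ _ _).trans ((hperm.cons _).cons _)).cons _
  · obtain ⟨L, hL, hperm⟩ := ih e (by omega) (fun k => f (1 + k)) (hshift 1 e (by omega))
      (fun k hk => hstep (1 + k) (by omega)) (fun k hk => hchord (1 + k) (by omega))
      (fun k hk => hlast (1 + k) (by omega))
    refine ⟨f 1 :: L, List.isChain_cons_cons.2 ⟨⟨hstep 0 (by omega), h01⟩, hL⟩, ?_⟩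
    rw [show e + 1 + 1 = 1 + (e + 1) by omega, List.range_add, List.map_append, List.map_map]
    exact hperm.cons (f 0)

end

def hostGraph (n : ℕ) : SimpleGraph ℕ :=
  SimpleGraph.fromRel fun a b => b < n ∧ (b = a + 1 ∨ (1 ≤ a ∧ b = a + 2) ∨ (a = 0 ∧ b = n - 1))

theorem hostGraph_adj {n a b : ℕ} : (hostGraph n).Adj a b ↔ a ≠ b ∧
    (b < n ∧ (b = a + 1 ∨ (1 ≤ a ∧ b = a + 2) ∨ (a = 0 ∧ b = n - 1)) ∨
      a < n ∧ (a = b + 1 ∨ (1 ≤ b ∧ a = b + 2) ∨ (b = 0 ∧ a = n - 1))) :=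
  fromRel_adj _ _ _

def hostEdge (n : ℕ) : Fin (n - 1) ⊕ Fin (n - 3) ⊕ Unit → Sym2 ℕ
  | .inl i => s(i, i + 1)
  | .inr (.inl i) => s(i + 1, i + 3)
  | .inr (.inr ()) => s(0, n - 1)

theorem hostEdge_injective {n : ℕ} (hn : 3 ≤ n) : Function.Injective (hostEdge n) := by
  rintro (i | i | ⟨⟩) (j | j | ⟨⟩) h <;>
    simp only [hostEdge, Sym2.eq_iff, Sum.inl.injEq, Sum.inr.injEq, reduceCtorEq, Fin.ext_iff,
      false_and, and_false, or_false] at h ⊢ <;>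
    omega

theorem range_hostEdge {n : ℕ} (hn : 2 ≤ n) : Set.range (hostEdge n) = (hostGraph n).edgeSet := by
  apply subset_antisymm
  · rintro _ ⟨i | i | ⟨⟩, rfl⟩ <;>
      simp only [hostEdge, mem_edgeSet, hostGraph_adj, true_or, or_true, and_true] <;> omega
  have key : ∀ a b, b < n ∧ (b = a + 1 ∨ (1 ≤ a ∧ b = a + 2) ∨ (a = 0 ∧ b = n - 1)) →
      s(a, b) ∈ Set.range (hostEdge n) := by
    rintro a b ⟨hb, rfl | ⟨ha, rfl⟩ | ⟨rfl, rfl⟩⟩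
    · exact ⟨.inl ⟨a, by omega⟩, rfl⟩
    · exact ⟨.inr (.inl ⟨a - 1, by omega⟩), by simp only [hostEdge, Sym2.eq_iff]; omega⟩
    · exact ⟨.inr (.inr ()), rfl⟩
  intro e he
  induction e using Sym2.ind with | _ a b => ?_
  rw [mem_edgeSet, hostGraph_adj] at he
  rcases he.2 with h | h
  · exact key a b h
  · exact Sym2.eq_swap ▸ key b a h

theorem ncard_edgeSet_hostGraph {n : ℕ} (hn : 3 ≤ n) :
    (hostGraph n).edgeSet.ncard = 2 * n - 3 := by
  rw [← range_hostEdge (by omega), Set.ncard_range_of_injective (hostEdge_injective hn)]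
  simp only [Nat.card_eq_fintype_card, Fintype.card_sum, Fintype.card_fin, Fintype.card_unit]
  omega

theorem support_hostGraph_subset (n : ℕ) :
    (hostGraph n).support ⊆ Set.range (Fin.val : Fin n → ℕ) := by
  rintro a ⟨b, hab⟩
  exact ⟨⟨a, by have := hostGraph_adj.1 hab; omega⟩, rfl⟩

section

variable {n : ℕ} {M : SimpleGraph ℕ}

theorem exists_isChain_perm_range'_ascending (hM : IsMatchingGraph M) {a b : ℕ} (ha : 1 ≤ a)
    (hab : a < b) (hb : b < n) (hlast : ¬ M.Adj (b - 1) b) :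
    ∃ L : List ℕ, (a :: L).IsChain (hostGraph n \ M).Adj ∧
      (a :: L).Perm (List.range' a (b - a + 1)) := by
  obtain ⟨L, hL, hperm⟩ := exists_isChain_perm_of_square (G := hostGraph n) hM (b - a)
    (fun k => a + k) (add_right_injective a).injOn (fun k hk => by rw [hostGraph_adj]; omega)
    (fun k hk => by rw [hostGraph_adj]; omega)
    (fun k hk => by rwa [show a + k = b - 1 by omega, show a + (k + 1) = b by omega])
  exact ⟨L, hL, by rwa [List.range'_eq_map_range]⟩

theorem exists_isChain_perm_range'_descending (hM : IsMatchingGraph M) {a b : ℕ} (ha : 1 ≤ a)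
    (hab : a < b) (hb : b < n) (hlast : ¬ M.Adj (a + 1) a) :
    ∃ L : List ℕ, (b :: L).IsChain (hostGraph n \ M).Adj ∧
      (b :: L).Perm (List.range' a (b - a + 1)) := by
  obtain ⟨L, hL, hperm⟩ := exists_isChain_perm_of_square (G := hostGraph n) hM (b - a)
    (fun k => b - k) (fun i hi j hj h => by simp only [Set.mem_Iic] at hi hj h; omega)
    (fun k hk => by rw [hostGraph_adj]; omega) (fun k hk => by rw [hostGraph_adj]; omega)
    (fun k hk => by rwa [show b - k = a + 1 by omega, show b - (k + 1) = a by omega])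
  have hrev :
      (List.range (b - a + 1)).map (fun k => b - k) = (List.range' a (b - a + 1)).reverse := by
    rw [List.reverse_range']
    exact List.map_congr_left fun x _ => by omega
  exact ⟨L, hL, hperm.trans (hrev ▸ List.reverse_perm _)⟩

theorem exists_isChain_perm_range_of_not_adj_zero_one (hM : IsMatchingGraph M) (hn : 3 ≤ n)
    (h01 : ¬ M.Adj 0 1) (hlast : ¬ M.Adj (n - 2) (n - 1)) :
    ∃ L : List ℕ, L.IsChain (hostGraph n \ M).Adj ∧ L.Perm (List.range n) := by
  obtain ⟨L, hL, hperm⟩ := exists_isChain_perm_range'_ascending (n := n) hM (b := n - 1) le_rfl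
    (by omega) (by omega) (by rwa [show n - 1 - 1 = n - 2 by omega])
  refine ⟨0 :: 1 :: L, List.isChain_cons_cons.2 ⟨⟨by rw [hostGraph_adj]; omega, h01⟩, hL⟩,
    (hperm.cons 0).trans ((List.perm_ext_iff_of_nodup ?_ List.nodup_range).2 fun x => ?_)⟩
  · simp [List.nodup_range']
  · simp only [List.mem_cons, List.mem_range'_1, List.mem_range]; omega

theorem exists_isChain_perm_range_of_not_adj_zero_last (hM : IsMatchingGraph M) (hn : 3 ≤ n)
    (h0 : ¬ M.Adj 0 (n - 1)) (h21 : ¬ M.Adj 2 1) :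
    ∃ L : List ℕ, L.IsChain (hostGraph n \ M).Adj ∧ L.Perm (List.range n) := by
  obtain ⟨L, hL, hperm⟩ := exists_isChain_perm_range'_descending (n := n) hM (a := 1) (b := n - 1)
    le_rfl (by omega) (by omega) h21
  refine ⟨0 :: (n - 1) :: L, List.isChain_cons_cons.2 ⟨⟨by rw [hostGraph_adj]; omega, h0⟩, hL⟩,
    (hperm.cons 0).trans ((List.perm_ext_iff_of_nodup ?_ List.nodup_range).2 fun x => ?_)⟩
  · simp [List.nodup_range']
  · simp only [List.mem_cons, List.mem_range'_1, List.mem_range]; omega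

theorem exists_isChain_perm_range_of_adj_one_two (hM : IsMatchingGraph M) (hn : 7 ≤ n)
    (h12 : M.Adj 1 2) (hlast : M.Adj (n - 2) (n - 1)) :
    ∃ L : List ℕ, L.IsChain (hostGraph n \ M).Adj ∧ L.Perm (List.range n) := by
  obtain ⟨L, hL, hperm⟩ := exists_isChain_perm_range'_descending (n := n) hM (a := 2) (b := n - 4)
    (by omega) (by omega) (by omega) (by rw [adj_comm]; exact hM.not_adj h12.symm (by omega))
  refine ⟨1 :: 0 :: (n - 1) :: (n - 3) :: (n - 2) :: (n - 4) :: L, ?_, ?_⟩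
  · simp only [List.isChain_cons_cons, sdiff_adj]
    refine ⟨⟨?_, hM.not_adj h12 (by omega)⟩,
      ⟨?_, by rw [adj_comm]; exact hM.not_adj hlast.symm (by omega)⟩,
      ⟨?_, hM.not_adj hlast.symm (by omega)⟩,
      ⟨?_, by rw [adj_comm]; exact hM.not_adj hlast (by omega)⟩,
      ⟨?_, hM.not_adj hlast (by omega)⟩, hL⟩ <;> rw [hostGraph_adj] <;> omega
  · refine (((((hperm.cons _).cons _).cons _).cons _).cons _).trans
      ((List.perm_ext_iff_of_nodup ?_ List.nodup_range).2 fun x => ?_)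
    · simp only [List.nodup_cons, List.mem_cons, List.mem_range'_1, List.nodup_range', zero_lt_one,
        and_true]
      omega
    · simp only [List.mem_cons, List.mem_range'_1, List.mem_range]; omega

theorem exists_isChain_perm_range (hM : IsMatchingGraph M) (hn : 7 ≤ n) :
    ∃ L : List ℕ, L.IsChain (hostGraph n \ M).Adj ∧ L.Perm (List.range n) := by
  by_cases h01 : M.Adj 0 1
  · exact exists_isChain_perm_range_of_not_adj_zero_last hM (by omega)
      (hM.not_adj h01 (by omega)) (by rw [adj_comm]; exact hM.not_adj h01.symm (by omega))
  by_cases hlast : M.Adj (n - 2) (n - 1)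
  · by_cases h12 : M.Adj 1 2
    · exact exists_isChain_perm_range_of_adj_one_two hM hn h12 hlast
    · exact exists_isChain_perm_range_of_not_adj_zero_last hM (by omega)
        (by rw [adj_comm]; exact hM.not_adj hlast.symm (by omega)) (by rwa [adj_comm])
  · exact exists_isChain_perm_range_of_not_adj_zero_one hM (by omega) h01 hlast

end

theorem stmt_6_general (n : ℕ) (hn : 12 ≤ n) :
    ∃ F : SimpleGraph (Fin n), F.edgeSet.ncard = 2 * n - 3 ∧
      Arrows F (pathGraph 3) (pathGraph n) := by
  refine ⟨(hostGraph n).comap Fin.val, ?_, fun R _ => ?_⟩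
  · rw [ncard_edgeSet_comap Fin.val_injective (support_hostGraph_subset n),
      ncard_edgeSet_hostGraph (by omega)]
  by_cases hR : Contains R (pathGraph 3)
  · exact Or.inl hR
  have hM := (isMatchingGraph_of_not_contains_pathGraph_three hR).map Fin.valEmbedding
  obtain ⟨L, hL, hperm⟩ := exists_isChain_perm_range (n := n) hM (by omega)
  exact Or.inr (comap_sdiff_map Fin.valEmbedding _ R ▸ contains_comap_val_of_perm_range hL hperm)

theorem stmt_6 (n : ℕ) (hn : 12 ≤ n) (he : Even n) :
    ∃ F : SimpleGraph (Fin n), F.edgeSet.ncard = 2 * n - 3 ∧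
      Arrows F (pathGraph 3) (pathGraph n) :=
  stmt_6_general n hn
end

section
/- The graph K_{4,4} − e, obtained from the complete bipartite graph K_{4,4} by deleting one edge, has 8 vertices and 15 edges and satisfies (K_{4,4} − e) → (P_3, C_8). -/
open SimpleGraph

/-- `K₄,₄ − e`: the complete bipartite graph `K₄,₄` with one edge deleted. -/
def K44e : SimpleGraph (Fin 4 ⊕ Fin 4) :=
  (completeBipartiteGraph (Fin 4) (Fin 4)).deleteEdges {s(Sum.inl 0, Sum.inr 0)}

/-!
A red graph with no red `P₃` has maximum degree at most one, so its red edges form a matching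
of `K₄,₄`, which extends to a perfect matching `π`. The blue graph then contains `K₄,₄` minus `π`
and minus the deleted edge, and this graph has an explicit Hamiltonian cycle.
-/

open Function

section Copies

variable {α : Type*} {G : SimpleGraph α}

theorem contains_pathGraph_three_of_adj {x y z : α} (hxy : G.Adj x y) (hxz : G.Adj x z)
    (hyz : y ≠ z) : Contains G (pathGraph 3) := by
  refine ⟨⟨![y, x, z], fun {u v} huv => ?_⟩, fun u v huv => ?_⟩
  · rw [pathGraph_adj] at huv
    fin_cases u <;> fin_cases v <;> simp_all [hxy.symm, hxz.symm]
  · fin_cases u <;> fin_cases v <;> simp_all [hxy.ne, hxz.ne, hxy.ne.symm, hxz.ne.symm, hyz.symm]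

theorem contains_cycleGraph_of_injective {n : ℕ} (f : Fin (n + 2) → α) (hf : Injective f)
    (hadj : ∀ k, G.Adj (f k) (f (k + 1))) : Contains G (cycleGraph (n + 2)) := by
  refine ⟨⟨f, fun {u v} huv => ?_⟩, hf⟩
  rcases cycleGraph_adj.mp huv with h | h
  · rw [sub_eq_iff_eq_add'.mp h]
    exact (hadj v).symm
  · rw [sub_eq_iff_eq_add'.mp h]
    exact hadj u

end Copies

theorem contains_cycleGraph_eight_of_zigzag {G : SimpleGraph (Fin 4 ⊕ Fin 4)}
    {a b : Fin 4 → Fin 4} (ha : Injective a) (hb : Injective b)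
    (hadj : ∀ k, G.Adj (.inl (a k)) (.inr (b k)) ∧ G.Adj (.inr (b k)) (.inl (a (k + 1)))) :
    Contains G (cycleGraph 8) := by
  let zigzag : Fin 8 → Fin 4 ⊕ Fin 4 :=
    ![.inl 0, .inr 0, .inl 1, .inr 1, .inl 2, .inr 2, .inl 3, .inr 3]
  have hzigzag : Injective zigzag := by decide
  refine contains_cycleGraph_of_injective (Sum.map a b ∘ zigzag)
    ((Sum.map_injective.mpr ⟨ha, hb⟩).comp hzigzag) fun k => ?_
  fin_cases k
  exacts [(hadj 0).1, (hadj 0).2, (hadj 1).1, (hadj 1).2,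
    (hadj 2).1, (hadj 2).2, (hadj 3).1, (hadj 3).2]

theorem swap_ne_zero_of_swap_add_two_eq :
    ∀ c k : Fin 4, Equiv.swap 3 c (k + 2) = c →
      Equiv.swap 3 c k ≠ 0 ∧ Equiv.swap 3 c (k + 1) ≠ 0 := by
  decide

/-- The cycle `a k, π (a (k + 2)), a (k + 1), …` avoids the edges `(i, π i)` because
`a (k + 2) ∉ {a k, a (k + 1)}`; ordering the left side by `a = swap 3 (π⁻¹ 0)` puts the right
vertex `0` between `a 1` and `a 2`, so it also avoids the edge `(0, 0)`. -/
theorem contains_cycleGraph_eight_of_perm {G : SimpleGraph (Fin 4 ⊕ Fin 4)}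
    (π : Equiv.Perm (Fin 4))
    (hG : ∀ i j, π i ≠ j → ¬(i = 0 ∧ j = 0) → G.Adj (.inl i) (.inr j)) :
    Contains G (cycleGraph 8) := by
  set a := Equiv.swap 3 (π⁻¹ 0)
  have hne : ∀ k : Fin 4, k + 2 ≠ k ∧ k + 2 ≠ k + 1 := by decide
  refine contains_cycleGraph_eight_of_zigzag (b := fun k => π (a (k + 2))) a.injective
    (π.injective.comp (a.injective.comp (add_left_injective 2)))
    fun k => ⟨hG _ _ ?_ ?_, (hG _ _ ?_ ?_).symm⟩
  · exact fun h => (hne k).1 (a.injective (π.injective h)).symm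
  · rintro ⟨h0, h⟩
    exact (swap_ne_zero_of_swap_add_two_eq _ k (π.eq_symm_apply.mpr h)).1 h0
  · exact fun h => (hne k).2 (a.injective (π.injective h)).symm
  · rintro ⟨h0, h⟩
    exact (swap_ne_zero_of_swap_add_two_eq _ k (π.eq_symm_apply.mpr h)).2 h0

theorem exists_perm_of_functional_of_injective {α : Type*} [Finite α] (r : α → α → Prop)
    (hfun : ∀ i j j', r i j → r i j' → j = j') (hinj : ∀ i i' j, r i j → r i' j → i = i') :
    ∃ π : Equiv.Perm α, ∀ i j, r i j → π i = j := by
  classical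
  have := Fintype.ofFinite α
  have hl (i : α) (h : ∃ j, r i j) : ∃ i', r i' h.choose := ⟨i, h.choose_spec⟩
  have hr (j : α) (h : ∃ i, r i j) : ∃ j', r h.choose j' := ⟨j, h.choose_spec⟩
  let e : {i // ∃ j, r i j} ≃ {j // ∃ i, r i j} :=
    { toFun := fun i => ⟨i.2.choose, hl i.1 i.2⟩
      invFun := fun j => ⟨j.2.choose, hr j.1 j.2⟩
      left_inv := fun i => Subtype.ext (hinj _ _ _ (hl i.1 i.2).choose_spec i.2.choose_spec)
      right_inv := fun j => Subtype.ext (hfun _ _ _ (hr j.1 j.2).choose_spec j.2.choose_spec) }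
  refine ⟨e.extendSubtype, fun i j h => ?_⟩
  rw [e.extendSubtype_apply_of_mem i ⟨j, h⟩]
  exact hfun _ _ _ (Exists.choose_spec _) h

theorem K44e_adj_inl_inr (i j : Fin 4) : K44e.Adj (.inl i) (.inr j) ↔ ¬(i = 0 ∧ j = 0) := by
  simp [K44e]

theorem ncard_edgeSet_K44e : K44e.edgeSet.ncard = 15 := by
  rw [K44e, edgeSet_deleteEdges, Set.ncard_sdiff_singleton_of_mem (by simp), Set.ncard_def,
    encard_edgeSet_completeBipartiteGraph]
  simp

theorem arrows_K44e_pathGraph_three_cycleGraph_eight :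
    Arrows K44e (pathGraph 3) (cycleGraph 8) := by
  intro R _
  by_cases hP : ∃ x y z, R.Adj x y ∧ R.Adj x z ∧ y ≠ z
  · obtain ⟨x, y, z, hxy, hxz, hyz⟩ := hP
    exact .inl (contains_pathGraph_three_of_adj hxy hxz hyz)
  · push Not at hP
    obtain ⟨π, hπ⟩ := exists_perm_of_functional_of_injective
      (fun i j => R.Adj (.inl i) (.inr j))
      (fun _ _ _ h h' => Sum.inr_injective (hP _ _ _ h h'))
      (fun _ _ _ h h' => Sum.inl_injective (hP _ _ _ h.symm h'.symm))
    refine .inr (contains_cycleGraph_eight_of_perm π fun i j hij h0 => ?_)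
    rw [sdiff_adj, K44e_adj_inl_inr]
    exact ⟨h0, fun h => hij (hπ i j h)⟩

theorem stmt_13 : Fintype.card (Fin 4 ⊕ Fin 4) = 8 ∧ K44e.edgeSet.ncard = 15 ∧
    Arrows K44e (pathGraph 3) (cycleGraph 8) :=
  ⟨rfl, ncard_edgeSet_K44e, arrows_K44e_pathGraph_three_cycleGraph_eight⟩
end

section
/- Let F_9 be the simple graph on vertex set {v_1, ..., v_9} that is the complement of the graph with edge set {v_1v_2, v_1v_3, v_1v_4, v_2v_3, v_2v_4, v_3v_4, v_5v_6, v_5v_7, v_5v_8, v_6v_7, v_6v_8, v_7v_8, v_4v_6, v_1v_7, v_3v_9, v_4v_9, v_7v_9, v_8v_9, v_2v_5}. Then F_9 has 17 edges and F_9 → (P_3, C_9). -/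
open SimpleGraph

/-- The graph `F₉`: the complement of the graph on 9 vertices with the listed 19 edges
(vertex `vᵢ` of the paper is `i - 1 : Fin 9`). -/
def F9 : SimpleGraph (Fin 9) :=
  (fromEdgeSet {s(0,1), s(0,2), s(0,3), s(1,2), s(1,3), s(2,3),
    s(4,5), s(4,6), s(4,7), s(5,6), s(5,7), s(6,7),
    s(3,5), s(0,6), s(2,8), s(3,8), s(6,8), s(7,8), s(1,4)})ᶜ

/-! ### Auxiliary data -/

/-- First endpoints of the 17 edges of `F9`. -/
def EA : Fin 17 → Fin 9 := ![0,0,0,0,1,1,1,1,2,2,2,2,3,3,3,4,5]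
/-- Second endpoints of the 17 edges of `F9`. -/
def EB : Fin 17 → Fin 9 := ![4,5,7,8,5,6,7,8,4,5,6,7,4,6,7,8,8]

/-- `cmL[i]` is the bitmask of edges `j < i` sharing a vertex with edge `i`. -/
def cmL : List ℕ := [0, 1, 3, 7, 2, 16, 52, 120, 1, 274, 800, 1860, 257, 5152, 14404, 4489, 33434]

def cm (i : ℕ) : ℕ := cmL.getD i 0

/-- Twenty Hamiltonian cycles of `F9` together with the bitmask of the edges they use;
every matching in `F9` is disjoint from one of them. -/
def cycData : List (ℕ × (Fin 9 → Fin 9)) := [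
  (56378, ![0,8,4,3,7,2,6,1,5]),
  (91045, ![0,4,2,5,8,1,6,3,7]),
  (81091, ![0,4,3,6,2,7,1,8,5]),
  (46684, ![0,8,4,3,6,2,5,1,7]),
  (59706, ![0,8,4,2,7,3,6,1,5]),
  (87462, ![0,5,8,1,6,2,4,3,7]),
  (78700, ![0,8,5,2,4,3,6,1,7]),
  (87657, ![0,8,5,2,6,1,7,3,4]),
  (91481, ![0,8,5,1,7,3,6,2,4]),
  (59075, ![0,4,8,1,7,3,6,2,5]),
  (92579, ![0,4,2,7,3,6,1,8,5]),
  (54950, ![0,5,2,6,1,8,4,3,7]),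
  (48218, ![0,8,4,3,6,2,7,1,5]),
  (89145, ![0,8,5,1,6,2,7,3,4]),
  (47676, ![0,8,4,3,6,1,5,2,7]),
  (80549, ![0,4,3,6,1,8,5,2,7]),
  (58172, ![0,8,4,2,5,1,6,3,7]),
  (54890, ![0,8,4,3,7,1,6,2,5]),
  (80985, ![0,8,5,1,7,2,6,3,4]),
  (91587, ![0,4,2,6,3,7,1,8,5])]

def masksL : List ℕ := cycData.map Prod.fst

/-- Branch-and-bound search over all matchings (as bitmasks of edge indices):
checks that every matching in `F9` avoids some cycle mask. -/
def srch : ℕ → ℕ → ℕ → Bool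
  | 0, _, _ => false
  | f+1, i, cur =>
    if 17 ≤ i then masksL.any (fun m => cur &&& m == 0)
    else srch f (i+1) cur && (((cur &&& cm i) != 0) || srch f (i+1) (cur ||| 2^i))

theorem srch_true : srch 18 0 0 = true := by decide

/-- `n` (as a set of edge indices) is a matching. -/
def MatchingN (n : ℕ) : Prop :=
  ∀ i j : ℕ, (cm i).testBit j = true → ¬(n.testBit i = true ∧ n.testBit j = true)

theorem masksL_lt : ∀ m ∈ masksL, m < 2^17 := by decide

theorem sound : ∀ f i cur, srch f i cur = true →
    ∀ n, MatchingN n → (∀ j, j < i → n.testBit j = cur.testBit j) →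
    (∀ j, i ≤ j → cur.testBit j = false) →
    ∃ m ∈ masksL, n &&& m = 0 := by
  intro f
  induction f with
  | zero => intro i cur h; simp [srch] at h
  | succ f ih =>
    intro i cur h n hm hlow hhigh
    rw [srch] at h
    by_cases hi : 17 ≤ i
    · rw [if_pos hi, List.any_eq_true] at h
      obtain ⟨m, hmem, hme⟩ := h
      refine ⟨m, hmem, ?_⟩
      have hmlt : m < 2^17 := masksL_lt m hmem
      have hc : cur &&& m = 0 := by simpa using hme
      apply Nat.eq_of_testBit_eq
      intro j
      rw [Nat.testBit_and, Nat.zero_testBit]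
      by_cases hj : j < 17
      · rw [hlow j (lt_of_lt_of_le hj hi), ← Nat.testBit_and, hc, Nat.zero_testBit]
      · have : m.testBit j = false := Nat.testBit_eq_false_of_lt
          (lt_of_lt_of_le hmlt (Nat.pow_le_pow_right (by norm_num) (le_of_not_gt hj)))
        simp [this]
    · rw [if_neg hi, Bool.and_eq_true] at h
      obtain ⟨h1, h2⟩ := h
      by_cases hb : n.testBit i = true
      · have hskip : (cur &&& cm i) = 0 := by
          apply Nat.eq_of_testBit_eq; intro j
          rw [Nat.testBit_and, Nat.zero_testBit]
          by_cases hj : j < i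
          · rw [← hlow j hj]
            cases hcj : (cm i).testBit j with
            | false => simp
            | true =>
              have := hm i j hcj
              rw [not_and] at this
              simp [this hb]
          · simp [hhigh j (le_of_not_gt hj)]
        rw [hskip] at h2
        simp only [bne_self_eq_false, Bool.false_or] at h2
        apply ih (i+1) (cur ||| 2^i) h2 n hm
        · intro j hj
          rw [Nat.testBit_or]
          rcases Nat.lt_succ_iff_lt_or_eq.mp hj with hj' | rfl
          · rw [hlow j hj', Nat.testBit_two_pow_of_ne (Nat.ne_of_gt hj')]
            simp
          · rw [hb, Nat.testBit_two_pow_self]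
            simp
        · intro j hj
          rw [Nat.testBit_or, hhigh j (le_trans (Nat.le_succ i) hj),
            Nat.testBit_two_pow_of_ne (by omega)]
          simp
      · apply ih (i+1) cur h1 n hm
        · intro j hj
          rcases Nat.lt_succ_iff_lt_or_eq.mp hj with hj' | rfl
          · exact hlow j hj'
          · rw [hhigh j le_rfl]
            simpa using hb
        · intro j hj
          exact hhigh j (le_trans (Nat.le_succ i) hj)

/-- Decode a `Fin 17 → Bool` into a natural number. -/
def bitsOf : List Bool → ℕ := List.foldr Nat.bit 0

theorem bitsOf_testBit (l : List Bool) : ∀ i : ℕ, (bitsOf l).testBit i = l.getD i false := by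
  induction l with
  | nil => intro i; simp [bitsOf, Nat.zero_testBit]
  | cons b l ih =>
    intro i
    cases i with
    | zero => simp [bitsOf, Nat.testBit_bit_zero]
    | succ i =>
      rw [bitsOf, List.foldr_cons, Nat.testBit_add_one, Nat.bit_div_two]
      simpa [bitsOf] using ih i

/-- Explicit adjacency function for `F9`. -/
def fAdj (a b : Fin 9) : Bool :=
  decide (s(a, b) ∈ [s((0:Fin 9),4), s((0:Fin 9),5), s((0:Fin 9),7), s((0:Fin 9),8),
    s((1:Fin 9),5), s((1:Fin 9),6), s((1:Fin 9),7), s((1:Fin 9),8),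
    s((2:Fin 9),4), s((2:Fin 9),5), s((2:Fin 9),6), s((2:Fin 9),7),
    s((3:Fin 9),4), s((3:Fin 9),6), s((3:Fin 9),7), s((4:Fin 9),8), s((5:Fin 9),8)])

theorem F9_adj_iff : ∀ a b : Fin 9, F9.Adj a b ↔ fAdj a b = true := by
  have h : ∀ a b : Fin 9, F9.Adj a b ↔ (a ≠ b ∧ ¬(s(a,b) ∈ ({s(0,1), s(0,2), s(0,3), s(1,2), s(1,3), s(2,3),
      s(4,5), s(4,6), s(4,7), s(5,6), s(5,7), s(6,7),
      s(3,5), s(0,6), s(2,8), s(3,8), s(6,8), s(7,8), s(1,4)} : Set (Sym2 (Fin 9))))) := by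
    intro a b
    rw [F9, compl_adj, fromEdgeSet_adj]
    tauto
  intro a b
  rw [h]
  simp only [Set.mem_insert_iff, Set.mem_singleton_iff, fAdj, List.mem_cons, List.not_mem_nil]
  revert a b
  decide

instance F9.decAdj : DecidableRel F9.Adj := fun a b => decidable_of_iff _ (F9_adj_iff a b).symm

/-- A path on 3 vertices from a middle vertex with two distinct neighbours. -/
theorem P3_mid {V : Type*} {S : SimpleGraph V} {x y z : V}
    (h1 : S.Adj x y) (h2 : S.Adj y z) (hxz : x ≠ z) : Contains S (pathGraph 3) := by
  have hne1 := h1.ne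
  have hne2 := h2.ne
  have hf : Function.Injective ![x, y, z] := by
    intro u v huv
    fin_cases u <;> fin_cases v <;> simp_all
  refine ⟨⟨![x, y, z], ?_⟩, hf⟩
  intro u v huv
  rw [pathGraph_adj] at huv
  fin_cases u <;> fin_cases v <;> simp_all <;>
    first | exact h1 | exact h1.symm | exact h2 | exact h2.symm

theorem P3_of {V : Type*} {S : SimpleGraph V} {a b c d : V}
    (h1 : S.Adj a b) (h2 : S.Adj c d)
    (hsh : a = c ∨ a = d ∨ b = c ∨ b = d) (hne : s(a,b) ≠ s(c,d)) :
    Contains S (pathGraph 3) := by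
  rcases hsh with rfl | rfl | rfl | rfl
  · refine P3_mid h1.symm h2 (fun hbd => hne ?_)
    rw [hbd]
  · refine P3_mid h1.symm h2.symm (fun hbc => hne ?_)
    rw [hbc, Sym2.eq_swap]
  · refine P3_mid h1 h2 (fun had => hne ?_)
    rw [had, Sym2.eq_swap]
  · refine P3_mid h1 h2.symm (fun hac => hne ?_)
    rw [hac]

/-- A 9-cycle from 9 distinct cyclically adjacent vertices. -/
theorem C9_of {V : Type*} {S : SimpleGraph V} (v : Fin 9 → V)
    (hinj : Function.Injective v) (hadj : ∀ i : Fin 9, S.Adj (v i) (v (i+1))) :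
    Contains S (cycleGraph 9) := by
  refine ⟨⟨v, ?_⟩, hinj⟩
  intro a b hab
  rw [cycleGraph_adj'] at hab
  rcases hab with hab | hab
  · have h : a - b = 1 := by
      apply Fin.ext; simpa using hab
    have h2 : a = b + 1 := by
      rw [sub_eq_iff_eq_add] at h
      rw [h, add_comm]
    rw [h2]
    exact (hadj b).symm
  · have h : b - a = 1 := by
      apply Fin.ext; simpa using hab
    have h2 : b = a + 1 := by
      rw [sub_eq_iff_eq_add] at h
      rw [h, add_comm]
    rw [h2]
    exact hadj a

theorem conflictFact : ∀ i j : Fin 17, (cm i).testBit j = true →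
    ((EA i = EA j ∨ EA i = EB j ∨ EB i = EA j ∨ EB i = EB j) ∧
      s(EA i, EB i) ≠ s(EA j, EB j)) := by decide

theorem cycFact : ∀ p ∈ cycData, Function.Injective p.2 ∧
    ∀ i : Fin 9, ∃ j : Fin 17, p.1.testBit j = true ∧
      s(p.2 i, p.2 (i+1)) = s(EA j, EB j) := by decide

theorem F9_edges : ∀ j : Fin 17, F9.Adj (EA j) (EB j) := by decide

theorem stmt_14 : F9.edgeSet.ncard = 17 ∧ Arrows F9 (pathGraph 3) (cycleGraph 9) := by
  constructor
  · rw [← coe_edgeFinset, Set.ncard_coe_finset]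
    decide
  · intro R hR
    classical
    set c : Fin 17 → Bool := fun i => decide (R.Adj (EA i) (EB i)) with hc
    set n : ℕ := bitsOf (List.ofFn c) with hn
    have hbit : ∀ i : Fin 17, n.testBit i = c i := by
      intro i
      rw [hn, bitsOf_testBit, List.getD_eq_getElem _ _ (by simp [i.isLt]), List.getElem_ofFn]
    have hbig : ∀ j : ℕ, 17 ≤ j → n.testBit j = false := by
      intro j hj
      rw [hn, bitsOf_testBit, List.getD_eq_default]
      simpa using hj
    by_cases hmat : MatchingN n
    · -- blue C9
      right
      obtain ⟨m, hmem, hz⟩ := sound 18 0 0 srch_true n hmat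
        (by intro j hj; omega) (by intro j _; exact Nat.zero_testBit j)
      rw [masksL, List.mem_map] at hmem
      obtain ⟨p, hp, rfl⟩ := hmem
      obtain ⟨hinj, hcyc⟩ := cycFact p hp
      apply C9_of p.2 hinj
      intro i
      obtain ⟨j, hj1, hj2⟩ := hcyc i
      have hnj : n.testBit j = false := by
        have := congrArg (fun k => k.testBit (j : ℕ)) hz
        simpa [Nat.testBit_and, hj1] using this
      have hRj : ¬ R.Adj (EA j) (EB j) := by
        rw [hbit] at hnj
        simpa [hc] using hnj
      have hF9j : F9.Adj (EA j) (EB j) := F9_edges j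
      rw [sdiff_adj]
      constructor
      · rw [← mem_edgeSet, hj2, mem_edgeSet]
        exact hF9j
      · rw [← mem_edgeSet, hj2, mem_edgeSet]
        exact hRj
    · -- red P3
      left
      rw [MatchingN] at hmat
      push_neg at hmat
      obtain ⟨i, j, hcm, hni, hnj⟩ := hmat
      have hi : i < 17 := by
        by_contra hi
        have : cm i = 0 := by
          rw [cm, List.getD_eq_default]
          simp only [cmL, List.length]
          omega
        rw [this, Nat.zero_testBit] at hcm
        exact absurd hcm (by simp)
      have hj : j < 17 := by
        by_contra hj
        rw [hbig j (by omega)] at hnj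
        exact absurd hnj (by simp)
      set i' : Fin 17 := ⟨i, hi⟩
      set j' : Fin 17 := ⟨j, hj⟩
      have h1 : R.Adj (EA i') (EB i') := by
        have := hbit i'
        rw [show ((i' : Fin 17) : ℕ) = i from rfl, hni, hc] at this
        exact of_decide_eq_true this.symm
      have h2 : R.Adj (EA j') (EB j') := by
        have := hbit j'
        rw [show ((j' : Fin 17) : ℕ) = j from rfl, hnj, hc] at this
        exact of_decide_eq_true this.symm
      obtain ⟨hsh, hne⟩ := conflictFact i' j' hcm
      exact P3_of h1 h2 hsh hne
end
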